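/- arXiv:1902.06561 — 8 statements merged into one kernel-verified Lean document; each statement's English description precedes it below -/
import Mathlib

section
/- There exists a constant C > 0 such that for every λ > 0 and every matrix F ∈ ℝ^{2×2} with det F ≥ 0, one has dist²(F, λ·SO(2)) ≤ C · W_λ(F). -/
open Matrix

/-- Euclidean norm on `ℝ²`. -/
noncomputable def vnorm (v : Fin 2 → ℝ) : ℝ := Real.sqrt (v 0 ^ 2 + v 1 ^ 2)

/-- The three unit bond directions of the equilateral triangular lattice. -/
noncomputable def ebond : Fin 3 → (Fin 2 → ℝ) :=
  ![![1, 0], ![1 / 2, Real.sqrt 3 / 2], ![-(1 / 2), Real.sqrt 3 / 2]]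

/-- The cell energy density `W_λ`. -/
noncomputable def Wcell (l : ℝ) (F : Matrix (Fin 2) (Fin 2) ℝ) : ℝ :=
  (vnorm (F.mulVec (ebond 0)) - l) ^ 2 + (vnorm (F.mulVec (ebond 1)) - l) ^ 2 +
    (vnorm (F.mulVec (ebond 2)) - l) ^ 2

/-- `SO(2)`: real orthogonal `2 × 2` matrices with determinant one. -/
def SO2 : Set (Matrix (Fin 2) (Fin 2) ℝ) :=
  {R | R.transpose * R = 1 ∧ R.det = 1}

/-- Frobenius norm of a `2 × 2` real matrix. -/
noncomputable def frob (A : Matrix (Fin 2) (Fin 2) ℝ) : ℝ :=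
  Real.sqrt (∑ i : Fin 2, ∑ j : Fin 2, (A i j) ^ 2)

/-- Distance (w.r.t. the Frobenius norm) from a matrix to a set of matrices. -/
noncomputable def distToSet (F : Matrix (Fin 2) (Fin 2) ℝ)
    (S : Set (Matrix (Fin 2) (Fin 2) ℝ)) : ℝ :=
  sInf ((fun G => frob (F - G)) '' S)

/-!
Let `σ₁ ≥ σ₂ ≥ 0` be the singular values of `F` (`det F ≥ 0`), `t = σ₁ + σ₂`, `u = σ₁ - σ₂`.
The nearest rotation gives `dist²(F, λ SO(2)) ≤ ((t - 2λ)² + u²) / 2`. Every bond length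
`aᵢ = |F eᵢ|` lies in `[σ₂, σ₁]`, so `|t - 2λ| ≤ u + 2 |a₁ - λ|`, and it remains to bound the
anisotropy `u`. Heron's formula for the deformed triangle with sides `F eᵢ` gives
`u² t² = |F|⁴ - 4 det² F = (8/9) Σᵢ<ⱼ (aᵢ² - aⱼ²)²`; since `aᵢ + aⱼ ≤ 2t`, this yields
`u² ≤ (32/9) Σᵢ<ⱼ (aᵢ - aⱼ)² ≤ (32/3) W_λ(F)`.
-/

open Real

lemma frob_sq (A : Matrix (Fin 2) (Fin 2) ℝ) :
    frob A ^ 2 = A 0 0 ^ 2 + A 0 1 ^ 2 + A 1 0 ^ 2 + A 1 1 ^ 2 := by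
  rw [frob, sq_sqrt (by positivity), Fin.sum_univ_two, Fin.sum_univ_two, Fin.sum_univ_two]
  ring

lemma distToSet_nonneg (F : Matrix (Fin 2) (Fin 2) ℝ) (S : Set (Matrix (Fin 2) (Fin 2) ℝ)) :
    0 ≤ distToSet F S :=
  Real.sInf_nonneg (by rintro _ ⟨G, _, rfl⟩; exact sqrt_nonneg _)

lemma distToSet_le_frob_sub {F G : Matrix (Fin 2) (Fin 2) ℝ} {S : Set (Matrix (Fin 2) (Fin 2) ℝ)}
    (hG : G ∈ S) : distToSet F S ≤ frob (F - G) :=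
  csInf_le ⟨0, by rintro _ ⟨G, _, rfl⟩; exact sqrt_nonneg _⟩ ⟨G, hG, rfl⟩

lemma rotation_mem_SO2 {c s : ℝ} (h : c ^ 2 + s ^ 2 = 1) : !![c, -s; s, c] ∈ SO2 := by
  refine ⟨?_, ?_⟩
  · ext i j
    fin_cases i <;> fin_cases j <;> simp [Matrix.mul_apply, Fin.sum_univ_two] <;> grind
  · rw [Matrix.det_fin_two_of]
    linear_combination h

lemma exists_cos_sin_mul_add_mul_eq_sqrt (x y : ℝ) :
    ∃ c s : ℝ, c ^ 2 + s ^ 2 = 1 ∧ x * c + y * s = √(x ^ 2 + y ^ 2) := by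
  rcases (by positivity : (0 : ℝ) ≤ x ^ 2 + y ^ 2).eq_or_lt with h | h
  · refine ⟨1, 0, by norm_num, ?_⟩
    have hx : x = 0 := by nlinarith [sq_nonneg x, sq_nonneg y]
    rw [← h, sqrt_zero, hx]
    ring
  · have hr : 0 < √(x ^ 2 + y ^ 2) := sqrt_pos.2 h
    have hr2 : √(x ^ 2 + y ^ 2) ^ 2 = x ^ 2 + y ^ 2 := sq_sqrt h.le
    refine ⟨x / √(x ^ 2 + y ^ 2), y / √(x ^ 2 + y ^ 2), ?_, ?_⟩ <;>
      field_simp <;> linarith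

/- For `det F ≥ 0` these are `σ₁ + σ₂` and `σ₁ - σ₂`, where `σ₁ ≥ σ₂` are the singular values
of `F`; up to a factor `√2` they are the norms of the conformal and anticonformal parts of `F`. -/
noncomputable def conformalNorm (F : Matrix (Fin 2) (Fin 2) ℝ) : ℝ :=
  √((F 0 0 + F 1 1) ^ 2 + (F 1 0 - F 0 1) ^ 2)

noncomputable def anticonformalNorm (F : Matrix (Fin 2) (Fin 2) ℝ) : ℝ :=
  √((F 0 0 - F 1 1) ^ 2 + (F 1 0 + F 0 1) ^ 2)

lemma ebond_sq_add_sq (i : Fin 3) : ebond i 0 ^ 2 + ebond i 1 ^ 2 = 1 := by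
  have h3 : √3 ^ 2 = 3 := sq_sqrt (by norm_num)
  fin_cases i <;> simp [ebond, div_pow, h3] <;> norm_num

section conformal

variable (F : Matrix (Fin 2) (Fin 2) ℝ)

lemma conformalNorm_sq : conformalNorm F ^ 2 = frob F ^ 2 + 2 * F.det := by
  rw [conformalNorm, sq_sqrt (by positivity), frob_sq, Matrix.det_fin_two]
  ring

lemma anticonformalNorm_sq : anticonformalNorm F ^ 2 = frob F ^ 2 - 2 * F.det := by
  rw [anticonformalNorm, sq_sqrt (by positivity), frob_sq, Matrix.det_fin_two]
  ring

lemma anticonformalNorm_le_conformalNorm (hF : 0 ≤ F.det) :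
    anticonformalNorm F ≤ conformalNorm F := by
  rw [Matrix.det_fin_two] at hF
  exact sqrt_le_sqrt (by linarith)

lemma exists_mem_SO2_frob_sub_smul_sq (l : ℝ) : ∃ R ∈ SO2,
    frob (F - l • R) ^ 2 = ((conformalNorm F - 2 * l) ^ 2 + anticonformalNorm F ^ 2) / 2 := by
  obtain ⟨c, s, hcs, hcN⟩ :=
    exists_cos_sin_mul_add_mul_eq_sqrt (F 0 0 + F 1 1) (F 1 0 - F 0 1)
  refine ⟨_, rotation_mem_SO2 hcs, ?_⟩
  have hsum : conformalNorm F ^ 2 + anticonformalNorm F ^ 2 = 2 * frob F ^ 2 := by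
    rw [conformalNorm_sq, anticonformalNorm_sq]
    ring
  rw [← conformalNorm] at hcN
  rw [frob_sq] at hsum ⊢
  simp only [Matrix.sub_apply, Matrix.smul_apply, Matrix.of_apply, Matrix.cons_val',
    Matrix.cons_val_zero, Matrix.cons_val_one, Matrix.empty_val', Matrix.cons_val_fin_one,
    smul_eq_mul]
  linear_combination -2 * l * hcN + 2 * l ^ 2 * hcs - hsum / 2

lemma distToSet_smul_SO2_sq_le (l : ℝ) :
    distToSet F ((fun R => l • R) '' SO2) ^ 2 ≤
      ((conformalNorm F - 2 * l) ^ 2 + anticonformalNorm F ^ 2) / 2 := by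
  obtain ⟨R, hR, hfrob⟩ := exists_mem_SO2_frob_sub_smul_sq F l
  rw [← hfrob]
  exact pow_le_pow_left₀ (distToSet_nonneg _ _)
    (distToSet_le_frob_sub (Set.mem_image_of_mem _ hR)) 2

lemma vnorm_mulVec_sq (v : Fin 2 → ℝ) :
    vnorm (F *ᵥ v) ^ 2 = (F 0 0 * v 0 + F 0 1 * v 1) ^ 2 + (F 1 0 * v 0 + F 1 1 * v 1) ^ 2 := by
  rw [vnorm, sq_sqrt (by positivity)]
  simp [Matrix.mulVec, dotProduct, Fin.sum_univ_two]

lemma abs_two_mul_vnorm_mulVec_sub_conformalNorm_le {v : Fin 2 → ℝ}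
    (hv : v 0 ^ 2 + v 1 ^ 2 = 1) :
    |2 * vnorm (F *ᵥ v) - conformalNorm F| ≤ anticonformalNorm F := by
  set a := vnorm (F *ᵥ v)
  have ha : 0 ≤ a := sqrt_nonneg _
  -- Lagrange's identity for `F v` and `F w`, `w` the rotation of `v` by a right angle.
  have hlagrange : F.det ^ 2 ≤ a ^ 2 * (frob F ^ 2 - a ^ 2) := by
    have h : a ^ 2 * (frob F ^ 2 - a ^ 2) - F.det ^ 2 =
        ((F 0 0 * v 0 + F 0 1 * v 1) * (F 0 1 * v 0 - F 0 0 * v 1) +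
          (F 1 0 * v 0 + F 1 1 * v 1) * (F 1 1 * v 0 - F 1 0 * v 1)) ^ 2 := by
      rw [vnorm_mulVec_sq, frob_sq, Matrix.det_fin_two]
      linear_combination
        ((F 0 0 * F 1 1 - F 0 1 * F 1 0) ^ 2 * (v 0 ^ 2 + v 1 ^ 2 + 1) -
          ((F 0 0 * v 0 + F 0 1 * v 1) ^ 2 + (F 1 0 * v 0 + F 1 1 * v 1) ^ 2) *
            (F 0 0 ^ 2 + F 0 1 ^ 2 + F 1 0 ^ 2 + F 1 1 ^ 2)) * hv
    exact sub_nonneg.1 (h ▸ sq_nonneg _)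
  have ht := conformalNorm_sq F
  have hat : 0 ≤ a * conformalNorm F := mul_nonneg ha (sqrt_nonneg _)
  have hkey : a ^ 2 + F.det ≤ a * conformalNorm F :=
    (le_abs_self _).trans (abs_le_of_sq_le_sq (by rw [mul_pow, ht]; nlinarith) hat)
  refine abs_le_of_sq_le_sq ?_ (sqrt_nonneg _)
  rw [anticonformalNorm_sq]
  nlinarith

lemma anticonformalNorm_sq_mul_conformalNorm_sq :
    anticonformalNorm F ^ 2 * conformalNorm F ^ 2 =
      8 / 9 * ((vnorm (F *ᵥ ebond 0) ^ 2 - vnorm (F *ᵥ ebond 1) ^ 2) ^ 2 +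
        (vnorm (F *ᵥ ebond 0) ^ 2 - vnorm (F *ᵥ ebond 2) ^ 2) ^ 2 +
        (vnorm (F *ᵥ ebond 1) ^ 2 - vnorm (F *ᵥ ebond 2) ^ 2) ^ 2) := by
  have h3 : √3 ^ 2 = 3 := sq_sqrt (by norm_num)
  have h3' : √3 ^ 4 = 9 := by rw [show √3 ^ 4 = (√3 ^ 2) ^ 2 by ring, h3]; norm_num
  simp only [anticonformalNorm_sq, conformalNorm_sq, vnorm_mulVec_sq, frob_sq, Matrix.det_fin_two,
    ebond, Fin.isValue, one_div, cons_val_zero, cons_val_fin_one, cons_val_one, cons_val,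
    mul_one, mul_zero, add_zero, mul_neg]
  ring_nf
  rw [h3, h3']
  ring

end conformal

lemma sq_le_of_abs_two_mul_sub_le {t u l a₁ a₂ a₃ : ℝ} (hut : u ≤ t)
    (h₁ : |2 * a₁ - t| ≤ u) (h₂ : |2 * a₂ - t| ≤ u) (h₃ : |2 * a₃ - t| ≤ u)
    (hheron : u ^ 2 * t ^ 2 =
      8 / 9 * ((a₁ ^ 2 - a₂ ^ 2) ^ 2 + (a₁ ^ 2 - a₃ ^ 2) ^ 2 + (a₂ ^ 2 - a₃ ^ 2) ^ 2)) :
    u ^ 2 ≤ 32 / 3 * ((a₁ - l) ^ 2 + (a₂ - l) ^ 2 + (a₃ - l) ^ 2) := by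
  have hu : 0 ≤ u := (abs_nonneg _).trans h₁
  have hpair {x y : ℝ} (hx : |2 * x - t| ≤ u) (hy : |2 * y - t| ≤ u) :
      (x ^ 2 - y ^ 2) ^ 2 ≤ (2 * t) ^ 2 * (x - y) ^ 2 := by
    have hxy : (x + y) ^ 2 ≤ (2 * t) ^ 2 := by
      rw [abs_le] at hx hy
      exact sq_le_sq' (by linarith) (by linarith)
    calc (x ^ 2 - y ^ 2) ^ 2 = (x + y) ^ 2 * (x - y) ^ 2 := by ring
      _ ≤ (2 * t) ^ 2 * (x - y) ^ 2 := mul_le_mul_of_nonneg_right hxy (sq_nonneg _)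
  have hspread : (a₁ - a₂) ^ 2 + (a₁ - a₃) ^ 2 + (a₂ - a₃) ^ 2 ≤
      3 * ((a₁ - l) ^ 2 + (a₂ - l) ^ 2 + (a₃ - l) ^ 2) := by
    nlinarith [sq_nonneg (a₁ + a₂ + a₃ - 3 * l)]
  have hmul : u ^ 2 * t ^ 2 ≤ 32 / 3 * ((a₁ - l) ^ 2 + (a₂ - l) ^ 2 + (a₃ - l) ^ 2) * t ^ 2 := by
    linarith [hpair h₁ h₂, hpair h₁ h₃, hpair h₂ h₃,
      mul_le_mul_of_nonneg_right hspread (sq_nonneg t)]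
  rcases (hu.trans hut).eq_or_lt with ht | ht
  · have : u = 0 := le_antisymm (ht ▸ hut) hu
    rw [this, sq, zero_mul]
    positivity
  · exact le_of_mul_le_mul_right hmul (by positivity)

lemma sq_sub_two_mul_le {t u l a : ℝ} (h : |2 * a - t| ≤ u) :
    (t - 2 * l) ^ 2 ≤ 2 * u ^ 2 + 8 * (a - l) ^ 2 := by
  have h' : (2 * a - t) ^ 2 ≤ u ^ 2 := by
    rw [abs_le] at h
    exact sq_le_sq' h.1 h.2
  nlinarith [sq_nonneg (t - 2 * a - 2 * (a - l))]

/-- There exists `C > 0` such that for every `λ > 0` and every `F ∈ ℝ^{2×2}` with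
`det F ≥ 0`, `dist²(F, λ·SO(2)) ≤ C · W_λ(F)`. -/
theorem stmt0 :
    ∃ C : ℝ, 0 < C ∧ ∀ l : ℝ, 0 < l → ∀ F : Matrix (Fin 2) (Fin 2) ℝ, 0 ≤ F.det →
      (distToSet F ((fun R => l • R) '' SO2)) ^ 2 ≤ C * Wcell l F := by
  refine ⟨20, by norm_num, fun l _ F hF => ?_⟩
  have hbond (i : Fin 3) :=
    abs_two_mul_vnorm_mulVec_sub_conformalNorm_le F (ebond_sq_add_sq i)
  have hu := sq_le_of_abs_two_mul_sub_le (l := l) (anticonformalNorm_le_conformalNorm F hF)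
    (hbond 0) (hbond 1) (hbond 2) (anticonformalNorm_sq_mul_conformalNorm_sq F)
  have ht := sq_sub_two_mul_le (l := l) (hbond 0)
  calc distToSet F ((fun R => l • R) '' SO2) ^ 2
      ≤ ((conformalNorm F - 2 * l) ^ 2 + anticonformalNorm F ^ 2) / 2 :=
        distToSet_smul_SO2_sq_le F l
    _ ≤ 20 * Wcell l F := by
        rw [Wcell]
        linarith [sq_nonneg (vnorm (F *ᵥ ebond 1) - l), sq_nonneg (vnorm (F *ᵥ ebond 2) - l)]
end

section
/- For every λ > 0 and every matrix F ∈ ℝ^{2×2} with det F ≥ 0, one has W_λ(F) = 0 if and only if F = λR for some R ∈ SO(2). -/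
open Matrix

set_option maxHeartbeats 1000000

/-- For every `λ > 0` and every `F ∈ ℝ^{2×2}` with `det F ≥ 0`, one has `W_λ(F) = 0`
if and only if `F = λR` for some `R ∈ SO(2)`. -/
theorem stmt1 (l : ℝ) (hl : 0 < l) (F : Matrix (Fin 2) (Fin 2) ℝ) (hF : 0 ≤ F.det) :
    Wcell l F = 0 ↔ ∃ R ∈ SO2, F = l • R := by
  have h3 : Real.sqrt 3 ^ 2 = 3 := Real.sq_sqrt (by norm_num)
  have hs3 : (0:ℝ) < Real.sqrt 3 := Real.sqrt_pos.mpr (by norm_num)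
  rw [Matrix.det_fin_two] at hF
  simp only [Wcell, vnorm, ebond, Matrix.mulVec, dotProduct, Fin.sum_univ_two,
    Matrix.cons_val_zero, Matrix.cons_val_one, Matrix.head_cons, Matrix.cons_val_two,
    Matrix.tail_cons]
  constructor
  · intro h
    set p := F 0 0 with hp
    set q := F 0 1 with hq
    set r := F 1 0 with hr
    set s := F 1 1 with hs
    have t1 : (Real.sqrt ((p * 1 + q * 0) ^ 2 + (r * 1 + s * 0) ^ 2) - l) ^ 2 = 0 := by
      nlinarith [sq_nonneg (Real.sqrt ((p * (1/2) + q * (Real.sqrt 3/2)) ^ 2 + (r * (1/2) + s * (Real.sqrt 3/2)) ^ 2) - l),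
        sq_nonneg (Real.sqrt ((p * -(1/2) + q * (Real.sqrt 3/2)) ^ 2 + (r * -(1/2) + s * (Real.sqrt 3/2)) ^ 2) - l)]
    have t2 : (Real.sqrt ((p * (1/2) + q * (Real.sqrt 3/2)) ^ 2 + (r * (1/2) + s * (Real.sqrt 3/2)) ^ 2) - l) ^ 2 = 0 := by
      nlinarith [sq_nonneg (Real.sqrt ((p * 1 + q * 0) ^ 2 + (r * 1 + s * 0) ^ 2) - l),
        sq_nonneg (Real.sqrt ((p * -(1/2) + q * (Real.sqrt 3/2)) ^ 2 + (r * -(1/2) + s * (Real.sqrt 3/2)) ^ 2) - l)]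
    have t3 : (Real.sqrt ((p * -(1/2) + q * (Real.sqrt 3/2)) ^ 2 + (r * -(1/2) + s * (Real.sqrt 3/2)) ^ 2) - l) ^ 2 = 0 := by
      nlinarith [sq_nonneg (Real.sqrt ((p * 1 + q * 0) ^ 2 + (r * 1 + s * 0) ^ 2) - l),
        sq_nonneg (Real.sqrt ((p * (1/2) + q * (Real.sqrt 3/2)) ^ 2 + (r * (1/2) + s * (Real.sqrt 3/2)) ^ 2) - l)]
    have u1 : Real.sqrt ((p * 1 + q * 0) ^ 2 + (r * 1 + s * 0) ^ 2) = l := by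
      have := sq_eq_zero_iff.mp t1; linarith
    have u2 : Real.sqrt ((p * (1/2) + q * (Real.sqrt 3/2)) ^ 2 + (r * (1/2) + s * (Real.sqrt 3/2)) ^ 2) = l := by
      have := sq_eq_zero_iff.mp t2; linarith
    have u3 : Real.sqrt ((p * -(1/2) + q * (Real.sqrt 3/2)) ^ 2 + (r * -(1/2) + s * (Real.sqrt 3/2)) ^ 2) = l := by
      have := sq_eq_zero_iff.mp t3; linarith
    have E1 : (p * 1 + q * 0) ^ 2 + (r * 1 + s * 0) ^ 2 = l ^ 2 := by
      rw [← u1]; exact (Real.sq_sqrt (by positivity)).symm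
    have E2 : (p * (1/2) + q * (Real.sqrt 3/2)) ^ 2 + (r * (1/2) + s * (Real.sqrt 3/2)) ^ 2 = l ^ 2 := by
      rw [← u2]; exact (Real.sq_sqrt (by positivity)).symm
    have E3 : (p * -(1/2) + q * (Real.sqrt 3/2)) ^ 2 + (r * -(1/2) + s * (Real.sqrt 3/2)) ^ 2 = l ^ 2 := by
      rw [← u3]; exact (Real.sq_sqrt (by positivity)).symm
    have A1 : p ^ 2 + r ^ 2 = l ^ 2 := by nlinarith [E1]
    have A3 : p * q + r * s = 0 := by
      have hd : Real.sqrt 3 * (p * q + r * s) = 0 := by linear_combination E2 - E3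
      rcases mul_eq_zero.mp hd with h' | h'
      · exact absurd h' (ne_of_gt hs3)
      · exact h'
    have A2 : q ^ 2 + s ^ 2 = l ^ 2 := by
      have := E2; nlinarith [E2, E3, A1, h3]
    clear t1 t2 t3 u1 u2 u3 E1 E2 E3 h h3 hs3
    have Adet : p * s - q * r = l ^ 2 := by
      have key : (p * s - q * r - l ^ 2) * (p * s - q * r + l ^ 2) = 0 := by
        linear_combination (q ^ 2 + s ^ 2) * A1 + l ^ 2 * A2 - (p * q + r * s) * A3
      rcases mul_eq_zero.mp key with h' | h'
      · linarith
      · have hl2 : 0 < l ^ 2 := by positivity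
        linarith
    have hFeta : F = !![p, q; r, s] := by
      rw [Matrix.eta_fin_two F]
    refine ⟨!![p / l, q / l; r / l, s / l], ⟨?_, ?_⟩, ?_⟩
    · have hln : l ≠ 0 := hl.ne'
      ext i j
      fin_cases i <;> fin_cases j <;>
        simp [Matrix.mul_apply, Fin.sum_univ_two, Matrix.one_apply,
          Matrix.transpose_apply, Matrix.vecHead, Matrix.vecTail] <;>
        field_simp
      · linear_combination A1
      · linear_combination A3
      · linear_combination A3
      · linear_combination A2
    · simp only [Set.mem_setOf_eq, Matrix.det_fin_two_of]
      field_simp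
      nlinarith [Adet]
    · rw [hFeta]
      ext i j
      fin_cases i <;> fin_cases j <;>
        simp <;> field_simp
  · rintro ⟨R, ⟨hR1, hR2⟩, rfl⟩
    have h00 := congrFun (congrFun hR1 0) 0
    have h01 := congrFun (congrFun hR1 0) 1
    have h11 := congrFun (congrFun hR1 1) 1
    simp [Matrix.mul_apply, Fin.sum_univ_two, Matrix.one_apply, Matrix.transpose_apply] at h00 h01 h11
    simp only [Matrix.smul_apply, smul_eq_mul]
    have w1 : (l * R 0 0 * 1 + l * R 0 1 * 0) ^ 2 + (l * R 1 0 * 1 + l * R 1 1 * 0) ^ 2 = l ^ 2 := by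
      linear_combination l ^ 2 * h00
    have w2 : (l * R 0 0 * (1/2) + l * R 0 1 * (Real.sqrt 3/2)) ^ 2 + (l * R 1 0 * (1/2) + l * R 1 1 * (Real.sqrt 3/2)) ^ 2 = l ^ 2 := by
      linear_combination (l ^ 2 / 4) * h00 + (l ^ 2 * Real.sqrt 3 / 2) * h01 + (3 * l ^ 2 / 4) * h11
        + (l ^ 2 / 4) * (R 0 1 * R 0 1 + R 1 1 * R 1 1) * h3
    have w3 : (l * R 0 0 * -(1/2) + l * R 0 1 * (Real.sqrt 3/2)) ^ 2 + (l * R 1 0 * -(1/2) + l * R 1 1 * (Real.sqrt 3/2)) ^ 2 = l ^ 2 := by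
      linear_combination (l ^ 2 / 4) * h00 - (l ^ 2 * Real.sqrt 3 / 2) * h01 + (3 * l ^ 2 / 4) * h11
        + (l ^ 2 / 4) * (R 0 1 * R 0 1 + R 1 1 * R 1 1) * h3
    rw [w1, w2, w3, Real.sqrt_sq hl.le]
    ring
end

section
/- Let R ∈ SO(2), G ∈ ℝ^{2×2}, δ ∈ ℝ, let ε_j > 0 be a sequence with ε_j → 0, and let δ_j ∈ ℝ satisfy δ_j / √ε_j → δ. Then lim_{j→∞} ε_j^{-1} · W_{1+δ_j}(R + √ε_j · G) = Σ_{k=1}^{3} (e_kᵀ (E − δ·I₂) e_k)², where E = (1/2)(Rᵀ G + Gᵀ R) is the symmetric part of Rᵀ G and I₂ is the 2×2 identity matrix. -/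
/-!
Along each bond `e`, `t ↦ |(R + tG) e|` is differentiable at `0` with value `|R e| = 1` and
derivative `(R e) ⬝ (G e) = eᵀ E e`. Writing `t_j = √ε_j`, the rescaled bond energy
`ε_j⁻¹ (|(R + t_j G) e| - 1 - δ_j)²` is the square of the difference quotient
`(|(R + t_j G) e| - 1) / t_j` minus `δ_j / t_j`, which tends to `(eᵀ E e - δ)² = (eᵀ (E - δ I) e)²`.
-/

open Matrix Filter

open Topology

lemma vnorm_eq_sqrt_dotProduct (v : Fin 2 → ℝ) : vnorm v = √(v ⬝ᵥ v) := by
  simp [vnorm, dotProduct, Fin.sum_univ_two, sq]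

lemma ebond_dotProduct_self (k : Fin 3) : ebond k ⬝ᵥ ebond k = 1 := by
  have h3 : √3 ^ 2 = 3 := Real.sq_sqrt (by norm_num)
  fin_cases k <;> simp [ebond, dotProduct, Fin.sum_univ_two] <;> nlinarith [h3]

lemma Wcell_eq_sum (l : ℝ) (F : Matrix (Fin 2) (Fin 2) ℝ) :
    Wcell l F = ∑ k, (vnorm (F *ᵥ ebond k) - l) ^ 2 := by
  simp [Wcell, Fin.sum_univ_three]

section Algebra

variable {n : Type*} [Fintype n]

lemma dotProduct_self_add_smul_mulVec (A B : Matrix n n ℝ) (t : ℝ) (e : n → ℝ) :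
    ((A + t • B) *ᵥ e) ⬝ᵥ ((A + t • B) *ᵥ e) =
      (A *ᵥ e) ⬝ᵥ (A *ᵥ e) + 2 * t * ((A *ᵥ e) ⬝ᵥ (B *ᵥ e)) + t ^ 2 * ((B *ᵥ e) ⬝ᵥ (B *ᵥ e)) := by
  simp only [add_mulVec, smul_mulVec, dotProduct_add, add_dotProduct, dotProduct_smul,
    smul_dotProduct, smul_eq_mul, dotProduct_comm (B *ᵥ e) (A *ᵥ e)]
  ring

lemma mulVec_dotProduct_mulVec (A B : Matrix n n ℝ) (e : n → ℝ) :
    (A *ᵥ e) ⬝ᵥ (B *ᵥ e) = e ⬝ᵥ ((Aᵀ * B) *ᵥ e) := by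
  rw [← mulVec_mulVec, dotProduct_mulVec e Aᵀ, vecMul_transpose]

lemma mulVec_dotProduct_mulVec_eq_symm (A B : Matrix n n ℝ) (e : n → ℝ) :
    (A *ᵥ e) ⬝ᵥ (B *ᵥ e) = e ⬝ᵥ (((1 / 2 : ℝ) • (Aᵀ * B + Bᵀ * A)) *ᵥ e) := by
  rw [smul_mulVec, add_mulVec, dotProduct_smul, dotProduct_add, ← mulVec_dotProduct_mulVec,
    ← mulVec_dotProduct_mulVec, dotProduct_comm (B *ᵥ e), smul_eq_mul]
  ring

end Algebra

lemma hasDerivAt_vnorm_add_smul_mulVec (A B : Matrix (Fin 2) (Fin 2) ℝ) (e : Fin 2 → ℝ)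
    (hAe : (A *ᵥ e) ⬝ᵥ (A *ᵥ e) = 1) :
    HasDerivAt (fun t : ℝ => vnorm ((A + t • B) *ᵥ e)) ((A *ᵥ e) ⬝ᵥ (B *ᵥ e)) 0 := by
  set c := (A *ᵥ e) ⬝ᵥ (B *ᵥ e)
  set b := (B *ᵥ e) ⬝ᵥ (B *ᵥ e)
  have hq : HasDerivAt (fun t : ℝ => 1 + 2 * t * c + t ^ 2 * b) (2 * c) 0 := by
    simpa using (((hasDerivAt_id' (0 : ℝ)).const_mul 2).mul_const c |>.const_add 1).fun_add
      ((hasDerivAt_pow 2 (0 : ℝ)).mul_const b)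
  have := hq.sqrt (by norm_num)
  simp only [vnorm_eq_sqrt_dotProduct, dotProduct_self_add_smul_mulVec, hAe]
  convert this using 1
  simp

lemma tendsto_inv_mul_sq_sub_of_hasDerivAt {f : ℝ → ℝ} {f' δ : ℝ} (hf : HasDerivAt f f' 0)
    {ε δseq : ℕ → ℝ} (hε : ∀ j, 0 < ε j) (hε0 : Tendsto ε atTop (𝓝 0))
    (hδ : Tendsto (fun j => δseq j / √(ε j)) atTop (𝓝 δ)) :
    Tendsto (fun j => (ε j)⁻¹ * (f √(ε j) - (f 0 + δseq j)) ^ 2) atTop (𝓝 ((f' - δ) ^ 2)) := by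
  have ht : Tendsto (fun j => √(ε j)) atTop (𝓝[≠] 0) := by
    refine tendsto_nhdsWithin_iff.2 ⟨?_, .of_forall fun j => (Real.sqrt_pos.2 (hε j)).ne'⟩
    simpa using hε0.sqrt
  have hslope := (hasDerivAt_iff_tendsto_slope_zero.1 hf).comp ht
  refine ((hslope.sub hδ).pow 2).congr fun j => ?_
  simp only [Function.comp_apply, zero_add, smul_eq_mul]
  have hεt : ε j = √(ε j) ^ 2 := (Real.sq_sqrt (hε j).le).symm
  have hpos := Real.sqrt_pos.2 (hε j)
  generalize √(ε j) = t at hpos hεt ⊢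
  rw [hεt]
  field_simp
  ring

lemma tendsto_bond_energy (R G : Matrix (Fin 2) (Fin 2) ℝ) (hR : Rᵀ * R = 1) (e : Fin 2 → ℝ)
    (he : e ⬝ᵥ e = 1) {δ : ℝ} {ε δseq : ℕ → ℝ} (hε : ∀ j, 0 < ε j)
    (hε0 : Tendsto ε atTop (𝓝 0)) (hδ : Tendsto (fun j => δseq j / √(ε j)) atTop (𝓝 δ)) :
    Tendsto (fun j => (ε j)⁻¹ * (vnorm ((R + √(ε j) • G) *ᵥ e) - (1 + δseq j)) ^ 2) atTop
      (𝓝 ((e ⬝ᵥ (((1 / 2 : ℝ) • (Rᵀ * G + Gᵀ * R) - δ • (1 : Matrix (Fin 2) (Fin 2) ℝ)) *ᵥ e))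
        ^ 2)) := by
  have hRe : (R *ᵥ e) ⬝ᵥ (R *ᵥ e) = 1 := by rw [mulVec_dotProduct_mulVec, hR, one_mulVec, he]
  have hf := hasDerivAt_vnorm_add_smul_mulVec R G e hRe
  have hf0 : vnorm ((R + (0 : ℝ) • G) *ᵥ e) = 1 := by
    rw [zero_smul, add_zero, vnorm_eq_sqrt_dotProduct, hRe, Real.sqrt_one]
  rw [sub_mulVec, dotProduct_sub, smul_mulVec δ, one_mulVec, dotProduct_smul, he, smul_eq_mul,
    mul_one, ← mulVec_dotProduct_mulVec_eq_symm]
  simpa only [hf0] using tendsto_inv_mul_sq_sub_of_hasDerivAt hf hε hε0 hδ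

/-- Let `R ∈ SO(2)`, `G ∈ ℝ^{2×2}`, `δ ∈ ℝ`, let `ε_j > 0` tend to `0` and
`δ_j / √ε_j → δ`.  Then
`ε_j⁻¹ · W_{1+δ_j}(R + √ε_j G) → Σ_{k=1}^{3} (e_kᵀ (E − δ·I₂) e_k)²`,
where `E = (1/2)(Rᵀ G + Gᵀ R)`. -/
theorem stmt4 (R G : Matrix (Fin 2) (Fin 2) ℝ) (hR : R ∈ SO2) (δ : ℝ)
    (ε δseq : ℕ → ℝ) (hε : ∀ j, 0 < ε j) (hε0 : Tendsto ε atTop (nhds 0))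
    (hδ : Tendsto (fun j => δseq j / Real.sqrt (ε j)) atTop (nhds δ)) :
    Tendsto (fun j => (ε j)⁻¹ * Wcell (1 + δseq j) (R + Real.sqrt (ε j) • G)) atTop
      (nhds (∑ k : Fin 3,
        (ebond k ⬝ᵥ
          (((1 / 2 : ℝ) • (R.transpose * G + G.transpose * R) -
            δ • (1 : Matrix (Fin 2) (Fin 2) ℝ)).mulVec (ebond k))) ^ 2)) := by
  simp_rw [Wcell_eq_sum, Finset.mul_sum]
  exact tendsto_finsetSum _ fun k _ =>
    tendsto_bond_energy R G hR.1 (ebond k) (ebond_dotProduct_self k) hε hε0 hδ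
end

section
/- Let L > 0 and let h_n : [0,L] → [0,∞) be integrable functions converging in L¹([0,L]) to an integrable function h : [0,L] → [0,∞) with ∫₀^L h dx > 0. Then for every sequence λ_n > 0 with λ_n → 0 there exist a constant μ > 0 and an integer N such that for every n ≥ N, |H_{λ_n}| + (1/λ_n) ∫_{[0,L] \ H_{λ_n}} h_n(x) dx > μ, where H_{λ_n} := {x ∈ [0,L] : h_n(x) ≥ λ_n} and |·| denotes Lebesgue measure. -/
/-!
Since `∫ h > 0`, some superlevel set `A = {h ≥ δ}` has positive measure `a`. Once `λ_n ≤ δ / 2`,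
a point of `A` outside `H_{λ_n}` has `|h_n - h| ≥ δ / 2`, so by Chebyshev's inequality and the
`L¹` convergence these points have measure less than `a / 2` for large `n`. Hence `|H_{λ_n}| > a / 2`
eventually, and the integral term is nonnegative.
-/

open MeasureTheory Filter Topology

variable {α : Type*} [MeasurableSpace α] {μ : Measure α}

theorem exists_pos_measure_setOf_le_of_integral_pos {f : α → ℝ} (hf : 0 < ∫ x, f x ∂μ) :
    ∃ δ : ℝ, 0 < δ ∧ 0 < μ {x | δ ≤ f x} := by
  by_contra! hnull
  have hlt : ∀ k : ℕ, ∀ᵐ x ∂μ, f x < 1 / (k + 1) := fun k =>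
    (measure_eq_zero_iff_ae_notMem.mp (nonpos_iff_eq_zero.mp (hnull _ k.one_div_pos_of_nat))).mono
      fun _ hx => not_le.mp hx
  have hnonpos : f ≤ᵐ[μ] 0 := (ae_all_iff.mpr hlt).mono fun x hx => by
    by_contra! hfx
    obtain ⟨k, hk⟩ := exists_nat_one_div_lt hfx
    exact (hx k).not_gt hk
  exact (integral_nonpos_of_ae hnonpos).not_gt hf

theorem measureReal_setOf_le_le_add_integral_abs_sub_div [IsFiniteMeasure μ] {f g : α → ℝ}
    (hfg : Integrable (fun x => g x - f x) μ) {lam δ ε : ℝ} (hε : 0 < ε) (hlam : lam + ε ≤ δ) :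
    μ.real {x | δ ≤ f x} ≤ μ.real {x | lam ≤ g x} + (∫ x, |g x - f x| ∂μ) / ε := by
  have hcover : {x | δ ≤ f x} ⊆ {x | lam ≤ g x} ∪ {x | ε ≤ |g x - f x|} := by
    intro x (hx : δ ≤ f x)
    by_contra! hout
    simp only [Set.mem_union, Set.mem_ofPred_eq, not_or, not_le] at hout
    linarith [neg_abs_le (g x - f x)]
  have hcheb : ε * μ.real {x | ε ≤ |g x - f x|} ≤ ∫ x, |g x - f x| ∂μ :=
    mul_meas_ge_le_integral_of_nonneg (ae_of_all _ fun _ => abs_nonneg _) hfg.abs ε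
  calc μ.real {x | δ ≤ f x}
      ≤ μ.real {x | lam ≤ g x} + μ.real {x | ε ≤ |g x - f x|} :=
        (measureReal_mono hcover).trans (measureReal_union_le _ _)
    _ ≤ μ.real {x | lam ≤ g x} + (∫ x, |g x - f x| ∂μ) / ε := by
        gcongr
        rwa [le_div_iff₀ hε, mul_comm]

theorem eventually_measureReal_setOf_le_sub_lt [IsFiniteMeasure μ] {f : α → ℝ} {g : ℕ → α → ℝ}
    (hfg : ∀ n, Integrable (fun x => g n x - f x) μ)
    (hconv : Tendsto (fun n => ∫ x, |g n x - f x| ∂μ) atTop (𝓝 0))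
    {lam : ℕ → ℝ} (hlam : Tendsto lam atTop (𝓝 0)) {δ ε : ℝ} (hδ : 0 < δ) (hε : 0 < ε) :
    ∀ᶠ n in atTop, μ.real {x | δ ≤ f x} - ε < μ.real {x | lam n ≤ g n x} := by
  filter_upwards [hlam.eventually (ge_mem_nhds (half_pos hδ)),
    hconv.eventually (gt_mem_nhds (mul_pos hε (half_pos hδ)))] with n hlam_n hconv_n
  have hcheb := measureReal_setOf_le_le_add_integral_abs_sub_div (hfg n) (half_pos hδ)
    (show lam n + δ / 2 ≤ δ by linarith)
  have : (∫ x, |g n x - f x| ∂μ) / (δ / 2) < ε := (div_lt_iff₀ (half_pos hδ)).mpr hconv_n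
  linarith

theorem stmt5_general (L : ℝ) (hn : ℕ → ℝ → ℝ) (h : ℝ → ℝ)
    (hint : ∀ n, IntegrableOn (hn n) (Set.Icc 0 L))
    (hnonneg : ∀ n, ∀ x ∈ Set.Icc (0 : ℝ) L, 0 ≤ hn n x)
    (hhint : IntegrableOn h (Set.Icc 0 L))
    (hconv : Tendsto (fun n => ∫ x in Set.Icc (0 : ℝ) L, |hn n x - h x|) atTop (nhds 0))
    (hpos : 0 < ∫ x in Set.Icc (0 : ℝ) L, h x)
    (lam : ℕ → ℝ) (hlam : ∀ n, 0 < lam n) (hlam0 : Tendsto lam atTop (nhds 0)) :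
    ∃ μ : ℝ, 0 < μ ∧ ∃ N : ℕ, ∀ n ≥ N,
      μ < (volume {x ∈ Set.Icc (0 : ℝ) L | lam n ≤ hn n x}).toReal
            + (1 / lam n) *
              ∫ x in Set.Icc (0 : ℝ) L \ {x ∈ Set.Icc (0 : ℝ) L | lam n ≤ hn n x}, hn n x := by
  set I := Set.Icc (0 : ℝ) L
  have hrestrict : ∀ p : ℝ → Prop, (volume.restrict I).real {x | p x} = volume.real {x ∈ I | p x} :=
    fun p => by rw [measureReal_restrict_apply' measurableSet_Icc, Set.inter_comm]; rfl
  obtain ⟨δ, hδ, hA⟩ := exists_pos_measure_setOf_le_of_integral_pos hpos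
  set a := (volume.restrict I).real {x | δ ≤ h x}
  have ha : 0 < a := ENNReal.toReal_pos hA.ne' (measure_ne_top _ _)
  obtain ⟨N, hN⟩ := (eventually_measureReal_setOf_le_sub_lt (fun n => (hint n).sub hhint) hconv
    hlam0 hδ (half_pos ha)).exists_forall_of_atTop
  refine ⟨a / 2, half_pos ha, N, fun n hnN => ?_⟩
  have hH : a / 2 < volume.real {x ∈ I | lam n ≤ hn n x} := by
    rw [← hrestrict]; linarith [hN n hnN]
  have hrest : 0 ≤ (1 / lam n) * ∫ x in I \ {x ∈ I | lam n ≤ hn n x}, hn n x :=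
    mul_nonneg (one_div_nonneg.mpr (hlam n).le) <| setIntegral_nonneg_of_ae_restrict <|
      ae_restrict_of_ae_restrict_of_subset Set.sdiff_subset <|
        (ae_restrict_mem measurableSet_Icc).mono (hnonneg n)
  exact lt_add_of_lt_of_nonneg hH hrest

/-- Let `h_n : [0,L] → [0,∞)` be integrable functions converging in `L¹([0,L])` to an
integrable `h : [0,L] → [0,∞)` with `∫₀^L h dx > 0`.  Then for every sequence `λ_n > 0`
with `λ_n → 0` there exist `μ > 0` and `N` such that for every `n ≥ N`,
`|H_{λ_n}| + (1/λ_n) ∫_{[0,L] \ H_{λ_n}} h_n(x) dx > μ`,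
where `H_{λ_n} = {x ∈ [0,L] : h_n(x) ≥ λ_n}`. -/
theorem stmt5 (L : ℝ) (hL : 0 < L) (hn : ℕ → ℝ → ℝ) (h : ℝ → ℝ)
    (hmeas : ∀ n, Measurable (hn n))
    (hint : ∀ n, IntegrableOn (hn n) (Set.Icc 0 L))
    (hnonneg : ∀ n, ∀ x ∈ Set.Icc (0 : ℝ) L, 0 ≤ hn n x)
    (hhint : IntegrableOn h (Set.Icc 0 L))
    (hhnonneg : ∀ x ∈ Set.Icc (0 : ℝ) L, 0 ≤ h x)
    (hconv : Tendsto (fun n => ∫ x in Set.Icc (0 : ℝ) L, |hn n x - h x|) atTop (nhds 0))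
    (hpos : 0 < ∫ x in Set.Icc (0 : ℝ) L, h x)
    (lam : ℕ → ℝ) (hlam : ∀ n, 0 < lam n) (hlam0 : Tendsto lam atTop (nhds 0)) :
    ∃ μ : ℝ, 0 < μ ∧ ∃ N : ℕ, ∀ n ≥ N,
      μ < (volume {x ∈ Set.Icc (0 : ℝ) L | lam n ≤ hn n x}).toReal
            + (1 / lam n) *
              ∫ x in Set.Icc (0 : ℝ) L \ {x ∈ Set.Icc (0 : ℝ) L | lam n ≤ hn n x}, hn n x :=
  stmt5_general L hn h hint hnonneg hhint hconv hpos lam hlam hlam0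
end

section
/- Let L > 0, V > 0 and β ∈ (0,1). Let h_n : [0,L] → [0,∞) be integrable functions with ‖h_n‖_{L¹} < V converging in L¹([0,L]) to an integrable function h : [0,L] → [0,∞) with ‖h‖_{L¹} = V. Set λ_n := (V − ‖h_n‖_{L¹})^β, H_n := {x ∈ [0,L] : h_n(x) ≥ λ_n}, and μ_n := |H_n| + (1/λ_n) ∫_{[0,L] \ H_n} h_n dx. Then μ_n > 0 for all sufficiently large n, and the numbers ε_n := (V − ‖h_n‖_{L¹})/μ_n satisfy ε_n → 0 and ε_n/λ_n → 0 as n → ∞. -/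
/-!
Off the superlevel set `H_n` we have `h_n < λ_n`, so `∫_{[0,L] \ H_n} h_n ≤ λ_n L → 0` and `H_n`
carries almost all of the mass `‖h_n‖ → V`. Since `h_n → h` in `L¹`, also `∫_{H_n} h ≥ V / 2`
eventually, and absolute continuity of the integral of `h` bounds `|H_n|`, hence `μ_n ≥ |H_n|`,
below by some `c > 0`. With `δ_n = V - ‖h_n‖ → 0` this gives `ε_n ≤ δ_n / c` and
`ε_n / λ_n = δ_n ^ (1 - β) / μ_n ≤ δ_n ^ (1 - β) / c`.
-/

open MeasureTheory Filter Topology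

section

variable {α ι : Type*} [MeasurableSpace α] {μ : Measure α} {l : Filter ι}

theorem tendsto_integral_of_tendsto_integral_abs_sub {f : ι → α → ℝ} {g : α → ℝ}
    (hf : ∀ i, Integrable (f i) μ) (hg : Integrable g μ)
    (h : Tendsto (fun i => ∫ x, |f i x - g x| ∂μ) l (𝓝 0)) :
    Tendsto (fun i => ∫ x, f i x ∂μ) l (𝓝 (∫ x, g x ∂μ)) := by
  refine tendsto_sub_nhds_zero_iff.1 (squeeze_zero_norm (fun i => ?_) h)
  rw [← integral_sub (hf i) hg]
  exact norm_integral_le_integral_norm _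

theorem setIntegral_sub_setIntegral_le_setIntegral_abs_sub {f g : α → ℝ} {s t : Set α}
    (hf : IntegrableOn f s μ) (hg : IntegrableOn g s μ) (hts : t ⊆ s) :
    ∫ x in t, f x ∂μ - ∫ x in t, g x ∂μ ≤ ∫ x in s, |f x - g x| ∂μ := by
  rw [← integral_sub (hf.mono_set hts) (hg.mono_set hts)]
  calc ∫ x in t, f x - g x ∂μ ≤ ∫ x in t, |f x - g x| ∂μ :=
        integral_mono ((hf.sub hg).mono_set hts) (IntegrableOn.mono_set (hf.sub hg).abs hts)
          fun x => le_abs_self _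
    _ ≤ ∫ x in s, |f x - g x| ∂μ :=
        setIntegral_mono_set (hf.sub hg).abs (ae_of_all _ fun x => abs_nonneg _)
          hts.eventuallyLE

theorem exists_pos_forall_measure_lt_setIntegral_lt {f : α → ℝ} (hf : Integrable f μ)
    {a : ℝ} (ha : 0 < a) : ∃ δ > 0, ∀ s, μ s < δ → ∫ x in s, f x ∂μ < a := by
  obtain ⟨δ, hδ, hs⟩ := exists_pos_setLIntegral_lt_of_measure_lt hf.2.ne
    (ENNReal.ofReal_pos.2 ha).ne'
  refine ⟨δ, hδ, fun s hμs => ?_⟩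
  calc ∫ x in s, f x ∂μ ≤ ‖∫ x in s, f x ∂μ‖ := Real.le_norm_self _
    _ ≤ (∫⁻ x in s, ‖f x‖ₑ ∂μ).toReal := by
        simpa only [ofReal_norm] using norm_integral_le_lintegral_norm (μ := μ.restrict s) f
    _ < a := ENNReal.toReal_lt_of_lt_ofReal (hs s hμs)

theorem exists_pos_eventually_le_measureReal {f : α → ℝ} {S : Set α} {s : ι → Set α}
    (hf : IntegrableOn f S μ) (hS : μ S ≠ ⊤) (hsS : ∀ i, s i ⊆ S) {a : ℝ} (ha : 0 < a)
    (h : ∀ᶠ i in l, a ≤ ∫ x in s i, f x ∂μ) : ∃ c > 0, ∀ᶠ i in l, c ≤ μ.real (s i) := by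
  obtain ⟨δ, hδ, hsmall⟩ := exists_pos_forall_measure_lt_setIntegral_lt hf ha
  have hδ1 : min δ 1 ≠ ⊤ := (min_le_right _ _).trans_lt ENNReal.one_lt_top |>.ne
  refine ⟨(min δ 1).toReal, ENNReal.toReal_pos (lt_min hδ one_pos).ne' hδ1,
    h.mono fun i hi => ?_⟩
  by_contra! hlt
  have hμs : μ (s i) < δ :=
    ((ENNReal.toReal_lt_toReal (measure_ne_top_of_subset (hsS i) hS) hδ1).1 hlt).trans_le
      (min_le_left _ _)
  have := hsmall (s i) ((Measure.restrict_apply_le _ _).trans_lt hμs)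
  rw [Measure.restrict_restrict_of_subset (hsS i)] at this
  linarith

theorem setIntegral_diff_le_mul_measureReal {f : α → ℝ} {S : Set α} (hS : μ S ≠ ⊤)
    (hf : ∀ x ∈ S, 0 ≤ f x) {t : ℝ} (ht : 0 ≤ t) :
    ∫ x in S \ {x ∈ S | t ≤ f x}, f x ∂μ ≤ t * μ.real S := by
  have hdiff : μ (S \ {x ∈ S | t ≤ f x}) < ⊤ :=
    (measure_ne_top_of_subset Set.sdiff_subset hS).lt_top
  calc ∫ x in S \ {x ∈ S | t ≤ f x}, f x ∂μ ≤ ‖∫ x in S \ {x ∈ S | t ≤ f x}, f x ∂μ‖ :=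
        Real.le_norm_self _
    _ ≤ t * μ.real (S \ {x ∈ S | t ≤ f x}) :=
        norm_setIntegral_le_of_norm_le_const hdiff fun x hx => by
          rw [Real.norm_of_nonneg (hf x hx.1)]
          exact (not_le.1 fun h => hx.2 ⟨hx.1, h⟩).le
    _ ≤ t * μ.real S := by gcongr; exact Set.sdiff_subset

theorem exists_pos_eventually_le_measureReal_superlevel {f : ι → α → ℝ} {g : α → ℝ}
    {S : Set α} {t : ι → ℝ} (hSm : MeasurableSet S) (hS : μ S ≠ ⊤)
    (hfm : ∀ i, Measurable (f i)) (hf : ∀ i, IntegrableOn (f i) S μ) (hg : IntegrableOn g S μ)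
    (hf0 : ∀ i, ∀ x ∈ S, 0 ≤ f i x) (ht0 : ∀ i, 0 ≤ t i) (ht : Tendsto t l (𝓝 0))
    (hconv : Tendsto (fun i => ∫ x in S, |f i x - g x| ∂μ) l (𝓝 0))
    (hg_pos : 0 < ∫ x in S, g x ∂μ) :
    ∃ c > 0, ∀ᶠ i in l, c ≤ μ.real {x ∈ S | t i ≤ f i x} := by
  set H : ι → Set α := fun i => {x ∈ S | t i ≤ f i x}
  have hHm : ∀ i, MeasurableSet (H i) := fun i =>
    hSm.inter (measurableSet_le measurable_const (hfm i))
  have hcompl : Tendsto (fun i => ∫ x in S \ H i, f i x ∂μ) l (𝓝 0) :=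
    squeeze_zero (fun i => setIntegral_nonneg (hSm.diff (hHm i)) fun x hx => hf0 i x hx.1)
      (fun i => setIntegral_diff_le_mul_measureReal hS (hf0 i) (ht0 i))
      (by simpa using ht.mul_const (μ.real S))
  have hH : Tendsto (fun i => ∫ x in H i, f i x ∂μ) l (𝓝 (∫ x in S, g x ∂μ)) := by
    have hsplit : ∀ i, ∫ x in H i, f i x ∂μ = ∫ x in S, f i x ∂μ - ∫ x in S \ H i, f i x ∂μ :=
      fun i => by rw [setIntegral_sdiff (hHm i) (hf i) fun x hx => hx.1]; ring
    simpa [hsplit] using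
      (tendsto_integral_of_tendsto_integral_abs_sub hf hg hconv).sub hcompl
  have hHg : ∀ᶠ i in l, (∫ x in S, g x ∂μ) / 2 ≤ ∫ x in H i, g x ∂μ := by
    filter_upwards [(hH.sub hconv).eventually
      (lt_mem_nhds (by linarith : (∫ x in S, g x ∂μ) / 2 < (∫ x in S, g x ∂μ) - 0))] with i hi
    linarith [setIntegral_sub_setIntegral_le_setIntegral_abs_sub (hf i) hg
      (fun x (hx : x ∈ H i) => hx.1)]
  exact exists_pos_eventually_le_measureReal hg hS (fun i x hx => hx.1) (half_pos hg_pos) hHg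

theorem Filter.Tendsto.div_of_eventually_const_le {u v : ι → ℝ} {c : ℝ} (hu : Tendsto u l (𝓝 0))
    (hc : 0 < c) (hv : ∀ᶠ i in l, c ≤ v i) :
    Tendsto (fun i => u i / v i) l (𝓝 0) := by
  refine squeeze_zero_norm' (hv.mono fun i hi => ?_) (by simpa using hu.norm.div_const c)
  rw [norm_div, Real.norm_of_nonneg (hc.le.trans hi)]
  exact div_le_div_of_nonneg_left (norm_nonneg _) hc hi

end

theorem stmt6_general (L V β : ℝ) (hV : 0 < V) (hβ0 : 0 < β) (hβ1 : β < 1)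
    (hn : ℕ → ℝ → ℝ) (h : ℝ → ℝ)
    (hmeas : ∀ n, Measurable (hn n))
    (hint : ∀ n, IntegrableOn (hn n) (Set.Icc 0 L))
    (hnonneg : ∀ n, ∀ x ∈ Set.Icc (0 : ℝ) L, 0 ≤ hn n x)
    (hhint : IntegrableOn h (Set.Icc 0 L))
    (hlt : ∀ n, (∫ x in Set.Icc (0 : ℝ) L, hn n x) < V)
    (hnorm : (∫ x in Set.Icc (0 : ℝ) L, h x) = V)
    (hconv : Tendsto (fun n => ∫ x in Set.Icc (0 : ℝ) L, |hn n x - h x|) atTop (nhds 0)) :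
    let lam : ℕ → ℝ := fun n => (V - ∫ x in Set.Icc (0 : ℝ) L, hn n x) ^ β
    let Hn : ℕ → Set ℝ := fun n => {x ∈ Set.Icc (0 : ℝ) L | lam n ≤ hn n x}
    let μn : ℕ → ℝ := fun n =>
      (volume (Hn n)).toReal + (1 / lam n) * ∫ x in Set.Icc (0 : ℝ) L \ Hn n, hn n x
    let εn : ℕ → ℝ := fun n => (V - ∫ x in Set.Icc (0 : ℝ) L, hn n x) / μn n
    (∀ᶠ n in atTop, 0 < μn n) ∧
      Tendsto εn atTop (nhds 0) ∧ Tendsto (fun n => εn n / lam n) atTop (nhds 0) := by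
  intro lam Hn μn εn
  set I : ℕ → ℝ := fun n => ∫ x in Set.Icc (0 : ℝ) L, hn n x
  have hgap : ∀ n, 0 < V - I n := fun n => sub_pos.2 (hlt n)
  have hgap_tendsto : Tendsto (fun n => V - I n) atTop (𝓝 0) := by
    simpa [hnorm] using (tendsto_const_nhds (x := V)).sub
      (tendsto_integral_of_tendsto_integral_abs_sub hint hhint hconv)
  have hlam_pos : ∀ n, 0 < lam n := fun n => Real.rpow_pos_of_pos (hgap n) β
  obtain ⟨c, hc, hcH⟩ := exists_pos_eventually_le_measureReal_superlevel measurableSet_Icc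
    measure_Icc_lt_top.ne hmeas hint hhint hnonneg (fun n => (hlam_pos n).le)
    (hgap_tendsto.rpow_const_nhds_zero hβ0) hconv (hnorm ▸ hV)
  have hμ : ∀ᶠ n in atTop, c ≤ μn n := hcH.mono fun n hn' => hn'.trans <|
    le_add_of_nonneg_right <| mul_nonneg (one_div_nonneg.2 (hlam_pos n).le) <|
      setIntegral_nonneg (measurableSet_Icc.diff (measurableSet_Icc.inter
        (measurableSet_le measurable_const (hmeas n)))) fun x hx => hnonneg n x hx.1
  have hratio : ∀ n, εn n / lam n = (V - I n) ^ (1 - β) / μn n := fun n => by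
    rw [Real.rpow_sub (hgap n), Real.rpow_one]; exact div_right_comm _ _ _
  refine ⟨hμ.mono fun n hn' => hc.trans_le hn',
    hgap_tendsto.div_of_eventually_const_le hc hμ, ?_⟩
  simpa only [hratio] using
    (hgap_tendsto.rpow_const_nhds_zero (sub_pos.2 hβ1)).div_of_eventually_const_le hc hμ

/-- Let `L > 0`, `V > 0`, `β ∈ (0,1)`.  Let `h_n : [0,L] → [0,∞)` be integrable with
`‖h_n‖_{L¹} < V`, converging in `L¹` to `h` with `‖h‖_{L¹} = V`.  With
`λ_n = (V − ‖h_n‖)^β`, `H_n = {h_n ≥ λ_n}`, `μ_n = |H_n| + (1/λ_n)∫_{[0,L]\H_n} h_n`,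
one has `μ_n > 0` for large `n`, and `ε_n = (V − ‖h_n‖)/μ_n` satisfies `ε_n → 0`
and `ε_n/λ_n → 0`. -/
theorem stmt6 (L V β : ℝ) (hL : 0 < L) (hV : 0 < V) (hβ0 : 0 < β) (hβ1 : β < 1)
    (hn : ℕ → ℝ → ℝ) (h : ℝ → ℝ)
    (hmeas : ∀ n, Measurable (hn n))
    (hint : ∀ n, IntegrableOn (hn n) (Set.Icc 0 L))
    (hnonneg : ∀ n, ∀ x ∈ Set.Icc (0 : ℝ) L, 0 ≤ hn n x)
    (hhint : IntegrableOn h (Set.Icc 0 L))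
    (hhnonneg : ∀ x ∈ Set.Icc (0 : ℝ) L, 0 ≤ h x)
    (hlt : ∀ n, (∫ x in Set.Icc (0 : ℝ) L, hn n x) < V)
    (hnorm : (∫ x in Set.Icc (0 : ℝ) L, h x) = V)
    (hconv : Tendsto (fun n => ∫ x in Set.Icc (0 : ℝ) L, |hn n x - h x|) atTop (nhds 0)) :
    let lam : ℕ → ℝ := fun n => (V - ∫ x in Set.Icc (0 : ℝ) L, hn n x) ^ β
    let Hn : ℕ → Set ℝ := fun n => {x ∈ Set.Icc (0 : ℝ) L | lam n ≤ hn n x}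
    let μn : ℕ → ℝ := fun n =>
      (volume (Hn n)).toReal + (1 / lam n) * ∫ x in Set.Icc (0 : ℝ) L \ Hn n, hn n x
    let εn : ℕ → ℝ := fun n => (V - ∫ x in Set.Icc (0 : ℝ) L, hn n x) / μn n
    (∀ᶠ n in atTop, 0 < μn n) ∧
      Tendsto εn atTop (nhds 0) ∧ Tendsto (fun n => εn n / lam n) atTop (nhds 0) :=
  stmt6_general L V β hV hβ0 hβ1 hn h hmeas hint hnonneg hhint hlt hnorm hconv
end

section
/- For every a ∈ ℝ and every t ≥ 0, the unit normals ν(a) and ν((1+t)a) satisfy |ν((1+t)a) − ν(a)| ≤ √2 · (t² + 2t), where ν(s) := (−s, 1)/√(1 + s²) ∈ ℝ² and |·| is the Euclidean norm on ℝ². -/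
/-- The upward unit normal to the graph of a function with slope `s`. -/
noncomputable def unitNormal (s : ℝ) : Fin 2 → ℝ :=
  ![-s / Real.sqrt (1 + s ^ 2), 1 / Real.sqrt (1 + s ^ 2)]

/-! Since `ν a` and `ν b` are unit vectors, `|ν b - ν a|² = 2 - 2c` with `c = ⟪ν a, ν b⟫`,
and Lagrange's identity `(1 + a²)(1 + b²) - (1 + ab)² = (b - a)²` gives
`1 - c² = (b - a)² / ((1 + a²)(1 + b²))`. When `ab ≥ 0` we have `0 ≤ c ≤ 1`, hence
`2 - 2c ≤ 2(1 - c²)`. For `b = (1 + t)a` this bounds `|ν b - ν a|` by `√2 t ≤ √2 (t² + 2t)`. -/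

theorem unitNormal_sub_sq_le {a b : ℝ} (hab : 0 ≤ a * b) :
    (unitNormal b 0 - unitNormal a 0) ^ 2 + (unitNormal b 1 - unitNormal a 1) ^ 2
      ≤ 2 * (b - a) ^ 2 / ((1 + a ^ 2) * (1 + b ^ 2)) := by
  set A := Real.sqrt (1 + a ^ 2) with hA_def
  set B := Real.sqrt (1 + b ^ 2) with hB_def
  have hA : A ^ 2 = 1 + a ^ 2 := Real.sq_sqrt (by positivity)
  have hB : B ^ 2 = 1 + b ^ 2 := Real.sq_sqrt (by positivity)
  have hA0 : 0 < A := Real.sqrt_pos.2 (by positivity)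
  have hB0 : 0 < B := Real.sqrt_pos.2 (by positivity)
  set c := (1 + a * b) / (A * B) with hc_def
  have hdist : (unitNormal b 0 - unitNormal a 0) ^ 2 + (unitNormal b 1 - unitNormal a 1) ^ 2
      = 2 - 2 * c := by
    simp only [unitNormal, Matrix.cons_val_zero, Matrix.cons_val_one, ← hA_def, ← hB_def]
    rw [hc_def]
    field_simp
    linear_combination (1 + b ^ 2 - 2 * B ^ 2) * hA - (1 + a ^ 2) * hB
  have hlagrange : 1 - c ^ 2 = (b - a) ^ 2 / ((1 + a ^ 2) * (1 + b ^ 2)) := by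
    rw [hc_def, div_pow, mul_pow, hA, hB]
    field_simp
    ring
  have hc0 : 0 ≤ c := by positivity
  have hc1 : c ≤ 1 := by
    have : 0 ≤ 1 - c ^ 2 := hlagrange ▸ by positivity
    nlinarith
  rw [hdist, mul_div_assoc, ← hlagrange]
  nlinarith

theorem unitNormal_sub_sq_le_of_scale (a : ℝ) {t : ℝ} (ht : 0 ≤ t) :
    (unitNormal ((1 + t) * a) 0 - unitNormal a 0) ^ 2
        + (unitNormal ((1 + t) * a) 1 - unitNormal a 1) ^ 2 ≤ 2 * t ^ 2 := by
  have hab : 0 ≤ a * ((1 + t) * a) := by nlinarith [sq_nonneg a]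
  refine (unitNormal_sub_sq_le hab).trans ?_
  rw [div_le_iff₀ (by positivity)]
  have ha : a ^ 2 ≤ (1 + a ^ 2) * (1 + ((1 + t) * a) ^ 2) := by
    nlinarith [sq_nonneg ((1 + t) * a)]
  calc 2 * ((1 + t) * a - a) ^ 2 = 2 * t ^ 2 * a ^ 2 := by ring
    _ ≤ 2 * t ^ 2 * ((1 + a ^ 2) * (1 + ((1 + t) * a) ^ 2)) := by gcongr

/-- For every `a ∈ ℝ` and `t ≥ 0`, the unit normals satisfy
`|ν((1+t)a) − ν(a)| ≤ √2 · (t² + 2t)`. -/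
theorem stmt8 (a t : ℝ) (ht : 0 ≤ t) :
    Real.sqrt ((unitNormal ((1 + t) * a) 0 - unitNormal a 0) ^ 2
        + (unitNormal ((1 + t) * a) 1 - unitNormal a 1) ^ 2)
      ≤ Real.sqrt 2 * (t ^ 2 + 2 * t) := calc
  _ ≤ Real.sqrt (2 * t ^ 2) := Real.sqrt_le_sqrt (unitNormal_sub_sq_le_of_scale a ht)
  _ = Real.sqrt 2 * t := by rw [Real.sqrt_mul zero_le_two, Real.sqrt_sq ht]
  _ ≤ Real.sqrt 2 * (t ^ 2 + 2 * t) := by gcongr; nlinarith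
end

section
/- Let h : ℝ → [0,∞) be lower semicontinuous and bounded, let n ∈ ℕ, n ≥ 1, and let h_n(x) := inf{ h(y) + n·|x−y| : y ∈ ℝ } be the Yosida transform. Let (a,b) be a bounded connected component of the open set {x ∈ ℝ : h_n(x) < h(x)}. Then for every x ∈ (a,b), h_n(x) = min{ h(a) + n(x − a), h(b) + n(b − x) }. -/
/-- A lower semicontinuous function bounded below attains its minimum on a
nonempty compact subset of `ℝ`. -/
lemma lsc_min_on_compact {f : ℝ → ℝ} (hf : LowerSemicontinuous f)
    (h0 : ∀ y, 0 ≤ f y) {K : Set ℝ} (hK : IsCompact K) (hne : K.Nonempty) :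
    ∃ y ∈ K, ∀ z ∈ K, f y ≤ f z := by
  set m := sInf (f '' K) with hm
  have hbdd : BddBelow (f '' K) := ⟨0, by rintro _ ⟨y, _, rfl⟩; exact h0 y⟩
  have hnei : (f '' K).Nonempty := hne.image f
  have hsel : ∀ k : ℕ, ∃ u ∈ K, f u < m + 1 / (k + 1) := by
    intro k
    have hlt : m < m + 1 / (k + 1) := by
      have : (0:ℝ) < 1 / (k + 1) := by positivity
      linarith
    obtain ⟨_, ⟨u, hu, rfl⟩, hlt'⟩ := exists_lt_of_csInf_lt hnei hlt
    exact ⟨u, hu, hlt'⟩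
  choose u hu hfu using hsel
  obtain ⟨y, hyK, φ, hφ, hconv⟩ := hK.tendsto_subseq hu
  refine ⟨y, hyK, fun z hz => ?_⟩
  have hym : f y ≤ m := by
    by_contra hc
    push_neg at hc
    obtain ⟨c, hc1, hc2⟩ := exists_between hc
    have hev : ∀ᶠ k in Filter.atTop, c < f (u (φ k)) :=
      hconv.eventually (hf y c hc2)
    have hev2 : ∀ᶠ k in Filter.atTop, (1:ℝ) / (φ k + 1) < c - m := by
      have htend : Filter.Tendsto (fun k : ℕ => (1:ℝ) / (φ k + 1))
          Filter.atTop (nhds 0) := by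
        have h1 : Filter.Tendsto (fun k : ℕ => (1:ℝ) / (k + 1))
            Filter.atTop (nhds 0) := tendsto_one_div_add_atTop_nhds_zero_nat
        exact h1.comp hφ.tendsto_atTop
      exact htend.eventually_lt_const (by linarith : (0:ℝ) < c - m)
    obtain ⟨k, hk1, hk2⟩ := (hev.and hev2).exists
    have := hfu (φ k)
    linarith
  calc f y ≤ m := hym
    _ ≤ f z := csInf_le hbdd ⟨z, hz, rfl⟩

/-- Let `h : ℝ → [0,∞)` be lower semicontinuous and bounded, `n ≥ 1`, and let
`h_n(x) = inf{h(y) + n·|x−y| : y ∈ ℝ}` be the Yosida transform.  If `(a,b)` is a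
bounded connected component of the open set `{h_n < h}`, then for every `x ∈ (a,b)`,
`h_n(x) = min{h(a) + n(x − a), h(b) + n(b − x)}`. -/
theorem stmt14 (h : ℝ → ℝ) (hnonneg : ∀ x, 0 ≤ h x) (hbdd : ∃ M : ℝ, ∀ x, h x ≤ M)
    (hlsc : LowerSemicontinuous h) (n : ℕ) (hn : 1 ≤ n) (a b : ℝ) (hab : a < b)
    (hsub : Set.Ioo a b ⊆ {x : ℝ | (⨅ y : ℝ, (h y + (n : ℝ) * |x - y|)) < h x})
    (ha : ¬ (⨅ y : ℝ, (h y + (n : ℝ) * |a - y|)) < h a)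
    (hb : ¬ (⨅ y : ℝ, (h y + (n : ℝ) * |b - y|)) < h b) :
    ∀ x ∈ Set.Ioo a b,
      (⨅ y : ℝ, (h y + (n : ℝ) * |x - y|)) =
        min (h a + (n : ℝ) * (x - a)) (h b + (n : ℝ) * (b - x)) := by
  obtain ⟨M, hM⟩ := hbdd
  have hn1 : (1:ℝ) ≤ (n:ℝ) := by exact_mod_cast hn
  have hnpos : (0:ℝ) ≤ (n:ℝ) := by linarith
  set F : ℝ → ℝ → ℝ := fun t y => h y + (n : ℝ) * |t - y| with hFdef
  have hF0 : ∀ t y, 0 ≤ F t y := fun t y =>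
    add_nonneg (hnonneg y) (mul_nonneg hnpos (abs_nonneg _))
  have hbb : ∀ t, BddBelow (Set.range (F t)) := fun t =>
    ⟨0, by rintro _ ⟨y, rfl⟩; exact hF0 t y⟩
  have hle : ∀ t y, (⨅ z, F t z) ≤ F t y := fun t y => ciInf_le (hbb t) y
  have hself : ∀ t, F t t = h t := by
    intro t; simp [hFdef]
  have hna : (⨅ z, F a z) = h a := by
    refine le_antisymm ?_ (not_lt.mp ha)
    have := hle a a; rwa [hself] at this
  have hnb : (⨅ z, F b z) = h b := by
    refine le_antisymm ?_ (not_lt.mp hb)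
    have := hle b b; rwa [hself] at this
  intro x hx
  obtain ⟨hax, hxb⟩ := hx
  have hM0 : 0 ≤ M := le_trans (hnonneg x) (hM x)
  -- minimizer of F x
  have hlscF : LowerSemicontinuous (F x) := by
    have hc : Continuous fun y : ℝ => (n : ℝ) * |x - y| := by continuity
    exact hlsc.add hc.lowerSemicontinuous
  obtain ⟨w, hwK, hwmin⟩ := lsc_min_on_compact hlscF (hF0 x) isCompact_Icc
    (⟨x, by constructor <;> simp <;> linarith⟩ : (Set.Icc (x - (M+1)) (x + (M+1))).Nonempty)
  have hwglob : ∀ z, F x w ≤ F x z := by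
    intro z
    by_cases hz : z ∈ Set.Icc (x - (M+1)) (x + (M+1))
    · exact hwmin z hz
    · have hxmem : x ∈ Set.Icc (x - (M+1)) (x + (M+1)) := by
        constructor <;> simp <;> linarith
      have h1 : F x w ≤ F x x := hwmin x hxmem
      have h2 : F x x = h x := hself x
      have habs : M + 1 < |x - z| := by
        simp only [Set.mem_Icc, not_and_or, not_le] at hz
        rcases hz with hz | hz
        · rw [abs_of_pos (by linarith)]; linarith
        · rw [abs_of_neg (by linarith)]; linarith
      have h3 : M + 1 < F x z := by
        have : |x - z| ≤ (n:ℝ) * |x - z| := le_mul_of_one_le_left (abs_nonneg _) hn1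
        have := hnonneg z
        simp only [hFdef]
        nlinarith
      have := hM x
      linarith
  have hinfw : (⨅ z, F x z) = F x w := by
    refine le_antisymm (hle x w) (le_ciInf hwglob)
  -- w is not inside (a, b)
  have hwnotin : w ∉ Set.Ioo a b := by
    intro hwin
    have h1 : (⨅ z, F w z) < h w := hsub hwin
    obtain ⟨z, h2⟩ := exists_lt_of_ciInf_lt h1
    have h3 : F x z ≤ F w z + (n:ℝ) * |x - w| := by
      have htri : |x - z| ≤ |x - w| + |w - z| := abs_sub_le x w z
      simp only [hFdef]
      nlinarith
    have h4 : F x z < h w + (n:ℝ) * |x - w| := by linarith [mul_nonneg hnpos (abs_nonneg (x - w))]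
    have h5 : h w + (n:ℝ) * |x - w| = F x w := by simp only [hFdef]
    have := hwglob z
    rw [h5] at h4
    linarith
  rw [hinfw]
  -- upper bound: F x w ≤ min(...)
  have hub : F x w ≤ min (h a + (n : ℝ) * (x - a)) (h b + (n : ℝ) * (b - x)) := by
    refine le_min ?_ ?_
    · have := hwglob a
      have : F x a = h a + (n:ℝ) * (x - a) := by
        simp only [hFdef]; rw [abs_of_pos (by linarith)]
      linarith [hwglob a]
    · have : F x b = h b + (n:ℝ) * (b - x) := by
        simp only [hFdef]; rw [abs_of_neg (by linarith)]; ring_nf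
      linarith [hwglob b]
  refine le_antisymm hub ?_
  -- lower bound
  simp only [Set.mem_Ioo, not_and_or, not_lt] at hwnotin
  rcases hwnotin with hwa | hbw
  · -- w ≤ a : F x w ≥ h a + n (x - a) ≥ min
    have h1 : h a ≤ h w + (n:ℝ) * (a - w) := by
      have := hle a w
      rw [hna] at this
      simpa [hFdef, abs_of_nonneg (by linarith : (0:ℝ) ≤ a - w)] using this
    have h2 : F x w = h w + (n:ℝ) * (x - w) := by
      simp only [hFdef]; rw [abs_of_pos (by linarith)]
    have h3 : h a + (n:ℝ) * (x - a) ≤ F x w := by rw [h2]; nlinarith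
    exact le_trans (min_le_left _ _) h3
  · -- b ≤ w
    have h1 : h b ≤ h w + (n:ℝ) * (w - b) := by
      have := hle b w
      rw [hnb] at this
      simpa [hFdef, abs_of_nonpos (by linarith : b - w ≤ (0:ℝ)), neg_sub] using this
    have h2 : F x w = h w + (n:ℝ) * (w - x) := by
      simp only [hFdef]; rw [abs_of_neg (by linarith), neg_sub]
    have h3 : h b + (n:ℝ) * (b - x) ≤ F x w := by rw [h2]; nlinarith
    exact le_trans (min_le_right _ _) h3
end

section
/- Let L > 0, M > 0, and set Q̄ := [0,L] × [0,M]. For a function g : [0,L] → [0,M] define A_g := {(x₁, x₂) ∈ Q̄ : g(x₁) ≤ x₂}. Let h_k : [0,L] → [0,M] be lower semicontinuous functions such that the compact sets A_{h_k} converge, with respect to the Hausdorff distance, to a compact set A ⊆ Q̄. Define h : [0,L] → [0,M] by h(x) := inf{ liminf_{k→∞} h_k(x_k) : x_k ∈ [0,L], x_k → x }. Then h is lower semicontinuous and A = A_h. -/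
/-!
Every point of the Hausdorff limit `A` is a limit of points `(x_k, t_k) ∈ A_{h_k}`, and
`h(x) ≤ liminf h_k(x_k) ≤ lim t_k = t`; so `A ⊆ A_h`. Conversely, if `h(x) ≤ t`, some admissible
sequence has `h_k(x_k) < t + δ` for infinitely many `k`, and then `(x_k, max t (h_k x_k)) ∈ A_{h_k}`
lies within `δ` of `(x, t)`; since `A` is closed, `(x, t) ∈ A`. Finally `h` is lower semicontinuous
because `A_h = A` is closed.
-/

open Filter

/-- The region `A_g = {(x₁,x₂) ∈ [0,L]×[0,M] : g(x₁) ≤ x₂}` above the graph of `g`. -/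
def aboveGraph (L M : ℝ) (g : ℝ → ℝ) : Set (ℝ × ℝ) :=
  {p : ℝ × ℝ | p.1 ∈ Set.Icc 0 L ∧ p.2 ∈ Set.Icc 0 M ∧ g p.1 ≤ p.2}

open Set Topology Metric
open scoped ENNReal

lemma Metric.exists_edist_le_infEDist_add {X : Type*} [PseudoEMetricSpace X] {s : Set X}
    (hs : s.Nonempty) (x : X) {ε : ℝ≥0∞} (hε : 0 < ε) :
    ∃ y ∈ s, edist x y ≤ infEDist x s + ε := by
  by_cases htop : infEDist x s = ⊤
  · obtain ⟨y, hy⟩ := hs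
    exact ⟨y, hy, by simp [htop]⟩
  · obtain ⟨y, hy, hxy⟩ := infEDist_lt_iff.1 (ENNReal.lt_add_right htop hε.ne')
    exact ⟨y, hy, hxy.le⟩

lemma exists_seq_tendsto_of_tendsto_hausdorffEDist {X : Type*} [PseudoEMetricSpace X]
    {S : ℕ → Set X} {A : Set X} (hne : ∀ k, (S k).Nonempty)
    (hS : Tendsto (fun k => hausdorffEDist (S k) A) atTop (𝓝 0)) {p : X} (hp : p ∈ A) :
    ∃ q : ℕ → X, (∀ k, q k ∈ S k) ∧ Tendsto q atTop (𝓝 p) := by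
  -- `(k : ℝ≥0∞)⁻¹` is `⊤` at `k = 0`, which is harmless here
  choose q hqS hq using fun k : ℕ =>
    exists_edist_le_infEDist_add (hne k) p (ENNReal.inv_pos.2 (ENNReal.natCast_ne_top k))
  refine ⟨q, hqS, tendsto_iff_edist_tendsto_0.2 ?_⟩
  have hbound : Tendsto (fun k : ℕ => hausdorffEDist (S k) A + (k : ℝ≥0∞)⁻¹) atTop (𝓝 0) := by
    simpa using hS.add ENNReal.tendsto_inv_nat_nhds_zero
  refine tendsto_of_tendsto_of_tendsto_of_le_of_le tendsto_const_nhds hbound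
    (fun _ => zero_le) fun k => ?_
  calc edist (q k) p = edist p (q k) := edist_comm _ _
    _ ≤ infEDist p (S k) + (k : ℝ≥0∞)⁻¹ := hq k
    _ ≤ hausdorffEDist (S k) A + (k : ℝ≥0∞)⁻¹ := by
      gcongr
      rw [hausdorffEDist_comm]
      exact infEDist_le_hausdorffEDist_of_mem hp

lemma mem_of_tendsto_hausdorffEDist_of_frequently {X : Type*} [PseudoMetricSpace X]
    {S : ℕ → Set X} {A : Set X} (hA : IsClosed A)
    (hS : Tendsto (fun k => hausdorffEDist (S k) A) atTop (𝓝 0)) {p : X}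
    (hp : ∀ δ > 0, ∃ᶠ k in atTop, ∃ q ∈ S k, dist p q < δ) : p ∈ A := by
  refine hA.closure_subset (Metric.mem_closure_iff.2 fun ε hε => ?_)
  have hε2 : 0 < ε / 2 := half_pos hε
  have hclose : ∀ᶠ k in atTop, hausdorffEDist (S k) A < ENNReal.ofReal (ε / 2) :=
    hS.eventually (gt_mem_nhds (ENNReal.ofReal_pos.2 hε2))
  obtain ⟨k, ⟨q, hqS, hpq⟩, hk⟩ := ((hp _ hε2).and_eventually hclose).exists
  obtain ⟨b, hbA, hqb⟩ := exists_edist_lt_of_hausdorffEDist_lt hqS hk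
  refine ⟨b, hbA, ?_⟩
  calc dist p b ≤ dist p q + dist q b := dist_triangle _ _ _
    _ < ε / 2 + ε / 2 := add_lt_add hpq (edist_lt_ofReal.1 hqb)
    _ = ε := add_halves ε

lemma liminf_mem_Icc {ι : Type*} {l : Filter ι} [l.NeBot] {a b : ℝ} {u : ι → ℝ}
    (hu : ∀ i, u i ∈ Icc a b) : liminf u l ∈ Icc a b :=
  ⟨le_liminf_of_le (isBoundedUnder_of ⟨b, fun i => (hu i).2⟩).isCoboundedUnder_ge
      (Eventually.of_forall fun i => (hu i).1),
    liminf_le_of_frequently_le (Eventually.of_forall fun i => (hu i).2).frequently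
      (isBoundedUnder_of ⟨a, fun i => (hu i).1⟩)⟩

section SeqLowerLimit

variable {α : Type*} [TopologicalSpace α]

noncomputable def seqLowerLimit (s : Set α) (f : ℕ → α → ℝ) (x : α) : ℝ :=
  sInf {l : ℝ | ∃ xs : ℕ → α, (∀ k, xs k ∈ s) ∧ Tendsto xs atTop (𝓝 x) ∧
    l = liminf (fun k => f k (xs k)) atTop}

variable {s : Set α} {f : ℕ → α → ℝ} {a b : ℝ}

lemma seqLowerLimit_le_liminf (hf : ∀ k, ∀ x ∈ s, f k x ∈ Icc a b) {x : α} {xs : ℕ → α}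
    (hxs : ∀ k, xs k ∈ s) (hlim : Tendsto xs atTop (𝓝 x)) :
    seqLowerLimit s f x ≤ liminf (fun k => f k (xs k)) atTop := by
  refine csInf_le ⟨a, ?_⟩ ⟨xs, hxs, hlim, rfl⟩
  rintro _ ⟨ys, hys, -, rfl⟩
  exact (liminf_mem_Icc fun k => hf k _ (hys k)).1

lemma exists_seq_liminf_lt_of_seqLowerLimit_lt {x : α} (hx : x ∈ s) {c : ℝ}
    (h : seqLowerLimit s f x < c) :
    ∃ xs : ℕ → α, (∀ k, xs k ∈ s) ∧ Tendsto xs atTop (𝓝 x) ∧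
      liminf (fun k => f k (xs k)) atTop < c := by
  obtain ⟨_, ⟨xs, hxs, hlim, rfl⟩, hlt⟩ :=
    exists_lt_of_csInf_lt (by exact ⟨_, fun _ => x, fun _ => hx, tendsto_const_nhds, rfl⟩) h
  exact ⟨xs, hxs, hlim, hlt⟩

lemma seqLowerLimit_mem_Icc (hf : ∀ k, ∀ x ∈ s, f k x ∈ Icc a b) {x : α} (hx : x ∈ s) :
    seqLowerLimit s f x ∈ Icc a b := by
  refine ⟨le_csInf ⟨_, fun _ => x, fun _ => hx, tendsto_const_nhds, rfl⟩ ?_, ?_⟩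
  · rintro _ ⟨xs, hxs, -, rfl⟩
    exact (liminf_mem_Icc fun k => hf k _ (hxs k)).1
  · exact (seqLowerLimit_le_liminf hf (fun _ => hx) tendsto_const_nhds).trans
      (liminf_mem_Icc fun k => hf k x hx).2

end SeqLowerLimit

section AboveGraph

variable {L M : ℝ} {f : ℕ → ℝ → ℝ}

lemma seqLowerLimit_le_of_tendsto_mem_aboveGraph (hf : ∀ k, ∀ x ∈ Icc 0 L, f k x ∈ Icc 0 M)
    {q : ℕ → ℝ × ℝ} (hq : ∀ k, q k ∈ aboveGraph L M (f k)) {p : ℝ × ℝ}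
    (hlim : Tendsto q atTop (𝓝 p)) : seqLowerLimit (Icc 0 L) f p.1 ≤ p.2 :=
  calc seqLowerLimit (Icc 0 L) f p.1 ≤ liminf (fun k => f k (q k).1) atTop :=
        seqLowerLimit_le_liminf hf (fun k => (hq k).1) ((continuous_fst.tendsto p).comp hlim)
    _ ≤ liminf (fun k => (q k).2) atTop :=
        liminf_le_liminf (Eventually.of_forall fun k => (hq k).2.2)
          (isBoundedUnder_of ⟨0, fun k => (hf k _ (hq k).1).1⟩)
          (isBoundedUnder_of ⟨M, fun k => (hq k).2.1.2⟩).isCoboundedUnder_ge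
    _ = p.2 := ((continuous_snd.tendsto p).comp hlim).liminf_eq

lemma frequently_exists_dist_lt_of_seqLowerLimit_le (hf : ∀ k, ∀ x ∈ Icc 0 L, f k x ∈ Icc 0 M)
    {x t : ℝ} (hx : x ∈ Icc 0 L) (ht : t ∈ Icc 0 M) (hxt : seqLowerLimit (Icc 0 L) f x ≤ t)
    {δ : ℝ} (hδ : 0 < δ) :
    ∃ᶠ k in atTop, ∃ q ∈ aboveGraph L M (f k), dist (x, t) q < δ := by
  obtain ⟨xs, hxs, hlim, hlt⟩ :=
    exists_seq_liminf_lt_of_seqLowerLimit_lt hx (hxt.trans_lt (lt_add_of_pos_right t hδ))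
  have hlow : ∃ᶠ k in atTop, f k (xs k) < t + δ :=
    frequently_lt_of_liminf_lt
      (isBoundedUnder_of ⟨M, fun k => (hf k _ (hxs k)).2⟩).isCoboundedUnder_ge hlt
  have hnear : ∀ᶠ k in atTop, dist (xs k) x < δ := Metric.tendsto_nhds.1 hlim δ hδ
  refine (hlow.and_eventually hnear).mono fun k ⟨hfk, hdk⟩ => ?_
  refine ⟨(xs k, max t (f k (xs k))),
    ⟨hxs k, ⟨le_max_of_le_left ht.1, max_le ht.2 (hf k _ (hxs k)).2⟩, le_max_right _ _⟩, ?_⟩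
  rw [Prod.dist_eq, dist_comm]
  refine max_lt hdk ?_
  rw [Real.dist_eq, abs_sub_lt_iff]
  constructor
  · linarith [le_max_left t (f k (xs k))]
  · linarith [max_lt (lt_add_of_pos_right t hδ) hfk]

lemma lowerSemicontinuousOn_of_isClosed_aboveGraph {g : ℝ → ℝ}
    (hg : ∀ x ∈ Icc 0 L, g x ∈ Icc 0 M) (hc : IsClosed (aboveGraph L M g)) :
    LowerSemicontinuousOn g (Icc 0 L) := by
  rw [lowerSemicontinuousOn_iff_isClosed_epigraph isClosed_Icc]
  -- the epigraph over `[0, L]` is the preimage of `A_g` under truncation of the height at `M`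
  have hepi : {p : ℝ × ℝ | p.1 ∈ Icc 0 L ∧ g p.1 ≤ p.2} =
      (fun p : ℝ × ℝ => (p.1, min p.2 M)) ⁻¹' aboveGraph L M g := by
    ext ⟨x, y⟩
    simp only [aboveGraph, mem_ofPred_eq, mem_preimage, mem_Icc, le_min_iff]
    constructor
    · rintro ⟨hx, hxy⟩
      have := hg x hx
      exact ⟨hx, ⟨⟨this.1.trans hxy, this.1.trans this.2⟩, min_le_right _ _⟩, hxy, this.2⟩
    · rintro ⟨hx, -, hxy, -⟩
      exact ⟨hx, hxy⟩
  rw [hepi]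
  exact hc.preimage (by fun_prop)

end AboveGraph

theorem stmt17_general (L M : ℝ) (hL : 0 < L)
    (hk : ℕ → ℝ → ℝ)
    (hmap : ∀ k, ∀ x ∈ Set.Icc (0 : ℝ) L, hk k x ∈ Set.Icc (0 : ℝ) M)
    (A : Set (ℝ × ℝ)) (hA : IsCompact A)
    (hAsub : A ⊆ Set.Icc (0 : ℝ) L ×ˢ Set.Icc (0 : ℝ) M)
    (hconv : Tendsto (fun k => EMetric.hausdorffEdist (aboveGraph L M (hk k)) A)
      atTop (nhds 0)) :
    let h : ℝ → ℝ := fun x => sInf {l : ℝ | ∃ xs : ℕ → ℝ,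
      (∀ k, xs k ∈ Set.Icc (0 : ℝ) L) ∧ Tendsto xs atTop (nhds x) ∧
        l = liminf (fun k => hk k (xs k)) atTop}
    (∀ x ∈ Set.Icc (0 : ℝ) L, h x ∈ Set.Icc (0 : ℝ) M) ∧
      LowerSemicontinuousOn h (Set.Icc 0 L) ∧ A = aboveGraph L M h := by
  change let h := seqLowerLimit (Icc 0 L) hk; _
  intro h
  have hmem : ∀ x ∈ Icc 0 L, h x ∈ Icc 0 M := fun x hx => seqLowerLimit_mem_Icc hmap hx
  have hne : ∀ k, (aboveGraph L M (hk k)).Nonempty := fun k =>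
    ⟨(0, hk k 0), ⟨le_rfl, hL.le⟩, hmap k 0 ⟨le_rfl, hL.le⟩, le_rfl⟩
  have hAeq : A = aboveGraph L M h := by
    ext ⟨x, t⟩
    constructor
    · intro hp
      obtain ⟨q, hqS, hq⟩ := exists_seq_tendsto_of_tendsto_hausdorffEDist hne hconv hp
      exact ⟨(hAsub hp).1, (hAsub hp).2, seqLowerLimit_le_of_tendsto_mem_aboveGraph hmap hqS hq⟩
    · rintro ⟨hx, ht, hxt⟩
      exact mem_of_tendsto_hausdorffEDist_of_frequently hA.isClosed hconv fun δ hδ =>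
        frequently_exists_dist_lt_of_seqLowerLimit_le hmap hx ht hxt hδ
  exact ⟨hmem, lowerSemicontinuousOn_of_isClosed_aboveGraph hmem (hAeq ▸ hA.isClosed), hAeq⟩

/-- Let `h_k : [0,L] → [0,M]` be lower semicontinuous with `A_{h_k} → A` in the
Hausdorff distance, `A ⊆ [0,L]×[0,M]` compact.  Define
`h(x) = inf{ liminf_k h_k(x_k) : x_k → x }`.  Then `h` maps `[0,L]` into `[0,M]`,
is lower semicontinuous, and `A = A_h`. -/
theorem stmt17 (L M : ℝ) (hL : 0 < L) (hM : 0 < M)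
    (hk : ℕ → ℝ → ℝ)
    (hmap : ∀ k, ∀ x ∈ Set.Icc (0 : ℝ) L, hk k x ∈ Set.Icc (0 : ℝ) M)
    (hlsc : ∀ k, LowerSemicontinuousOn (hk k) (Set.Icc 0 L))
    (A : Set (ℝ × ℝ)) (hA : IsCompact A)
    (hAsub : A ⊆ Set.Icc (0 : ℝ) L ×ˢ Set.Icc (0 : ℝ) M)
    (hconv : Tendsto (fun k => EMetric.hausdorffEdist (aboveGraph L M (hk k)) A)
      atTop (nhds 0)) :
    let h : ℝ → ℝ := fun x => sInf {l : ℝ | ∃ xs : ℕ → ℝ,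
      (∀ k, xs k ∈ Set.Icc (0 : ℝ) L) ∧ Tendsto xs atTop (nhds x) ∧
        l = liminf (fun k => hk k (xs k)) atTop}
    (∀ x ∈ Set.Icc (0 : ℝ) L, h x ∈ Set.Icc (0 : ℝ) M) ∧
      LowerSemicontinuousOn h (Set.Icc 0 L) ∧ A = aboveGraph L M h :=
  stmt17_general L M hL hk hmap A hA hAsub hconv
end
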